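/- arXiv:2605.30110 — 7 statements merged into one kernel-verified Lean document; each statement's English description precedes it below -/
import Mathlib

section
/- Let A be a bounded normal operator, Γ a simple closed curve not intersecting σ(A), P = (1/2πi)∮_Γ (z − A)^{-1} dz the Riesz spectral projector, and for a bounded operator X define X̃ = (1/2πi)∮_Γ (z−A)^{-1} X (z−A)^{-1} dz. Then [A, X̃] = [P, X]. -/
/-!
For `z` off the spectrum, the resolvent `r = (z - a)⁻¹` satisfies `a r = r a = z r - 1`, so the
scalar terms cancel in `a (r x r) - (r x r) a = (z r - 1) x r - r x (z r - 1) = r x - x r`.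
Integrating this pointwise identity along the contour, and commuting the integral with the
continuous linear maps `y ↦ ⁅c, y⁆` and `y ↦ ⁅y, c⁆`, gives `[A, X̃] = [P, X]`.
-/

open scoped Matrix.Norms.L2Operator ComplexOrder
open Complex Matrix

section Commutator

attribute [local instance] LieRing.ofAssociativeRing

section Resolvent

variable {R 𝔸 : Type*} [CommSemiring R] [Ring 𝔸] [Algebra R 𝔸] {a : 𝔸} {z : R}

theorem spectrum.mul_resolvent (hz : z ∈ resolventSet R a) :
    a * resolvent a z = z • resolvent a z - 1 := by
  have h := Ring.mul_inverse_cancel _ (spectrum.mem_resolventSet_iff.mp hz)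
  rw [sub_mul, ← Algebra.smul_def] at h
  rw [resolvent, ← h, sub_sub_cancel]

theorem spectrum.resolvent_mul (hz : z ∈ resolventSet R a) :
    resolvent a z * a = z • resolvent a z - 1 := by
  have h := Ring.inverse_mul_cancel _ (spectrum.mem_resolventSet_iff.mp hz)
  rw [mul_sub, ← Algebra.commutes, ← Algebra.smul_def] at h
  rw [resolvent, ← h, sub_sub_cancel]

theorem spectrum.lie_resolvent_mul_mul_resolvent (hz : z ∈ resolventSet R a) (x : 𝔸) :
    ⁅a, resolvent a z * x * resolvent a z⁆ = ⁅resolvent a z, x⁆ := by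
  set r := resolvent a z
  calc ⁅a, r * x * r⁆ = (a * r) * (x * r) - (r * x) * (r * a) := by
        rw [Ring.lie_def]; noncomm_ring
    _ = ⁅r, x⁆ := by
        rw [spectrum.mul_resolvent hz, spectrum.resolvent_mul hz, Ring.lie_def]
        simp only [sub_mul, mul_sub, smul_mul_assoc, mul_smul_comm, one_mul, mul_one, mul_assoc]
        abel

end Resolvent

section IntervalIntegral

variable {𝔸 : Type*} [NormedRing 𝔸] [NormedSpace ℝ 𝔸] [IsScalarTower ℝ 𝔸 𝔸]
  [SMulCommClass ℝ 𝔸 𝔸] [CompleteSpace 𝔸] {f : ℝ → 𝔸} {t₀ t₁ : ℝ}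

theorem intervalIntegral.lie_integral (hf : IntervalIntegrable f MeasureTheory.volume t₀ t₁)
    (c : 𝔸) : ⁅c, ∫ t in t₀..t₁, f t⁆ = ∫ t in t₀..t₁, ⁅c, f t⁆ := by
  simpa [Ring.lie_def] using
    ((ContinuousLinearMap.mul ℝ 𝔸 c - (ContinuousLinearMap.mul ℝ 𝔸).flip c
      ).intervalIntegral_comp_comm hf).symm

theorem intervalIntegral.integral_lie (hf : IntervalIntegrable f MeasureTheory.volume t₀ t₁)
    (c : 𝔸) : ⁅∫ t in t₀..t₁, f t, c⁆ = ∫ t in t₀..t₁, ⁅f t, c⁆ := by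
  simpa [Ring.lie_def] using
    (((ContinuousLinearMap.mul ℝ 𝔸).flip c - ContinuousLinearMap.mul ℝ 𝔸 c
      ).intervalIntegral_comp_comm hf).symm

end IntervalIntegral

theorem Continuous.resolvent {𝕜 𝔸 X : Type*} [NontriviallyNormedField 𝕜] [NormedRing 𝔸]
    [NormedAlgebra 𝕜 𝔸] [CompleteSpace 𝔸] [TopologicalSpace X] {a : 𝔸} {γ : X → 𝕜}
    (hγ : Continuous γ) (hspec : ∀ t, γ t ∈ resolventSet 𝕜 a) :
    Continuous fun t ↦ resolvent a (γ t) :=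
  continuous_iff_continuousAt.mpr fun t ↦
    (spectrum.hasDerivAt_resolvent_const_left (hspec t)).continuousAt.comp hγ.continuousAt

theorem lie_integral_resolvent_mul_mul_resolvent {𝔸 : Type*} [NormedRing 𝔸]
    [NormedAlgebra ℂ 𝔸] [CompleteSpace 𝔸] (a x : 𝔸) {γ γ' : ℝ → ℂ} (hγ : Continuous γ)
    (hγ' : Continuous γ') (hspec : ∀ t, γ t ∈ resolventSet ℂ a) (t₀ t₁ : ℝ) :
    ⁅a, ∫ t in t₀..t₁, γ' t • (resolvent a (γ t) * x * resolvent a (γ t))⁆ =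
      ⁅∫ t in t₀..t₁, γ' t • resolvent a (γ t), x⁆ := by
  have hr := hγ.resolvent hspec
  have hsandwich : Continuous fun t ↦ γ' t • (resolvent a (γ t) * x * resolvent a (γ t)) :=
    hγ'.smul ((hr.mul continuous_const).mul hr)
  rw [intervalIntegral.lie_integral (hsandwich.intervalIntegrable _ _),
    intervalIntegral.integral_lie (f := fun t ↦ γ' t • resolvent a (γ t))
      ((hγ'.smul hr).intervalIntegrable _ _)]
  simp only [lie_smul, smul_lie, spectrum.lie_resolvent_mul_mul_resolvent (hspec _)]

end Commutator

theorem statement1_general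
    {n : ℕ} (A X : Matrix (Fin n) (Fin n) ℂ)
    (γ γ' : ℝ → ℂ)
    (hγ : ∀ t, HasDerivAt γ (γ' t) t)
    (hγ'cont : Continuous γ')
    (hspec : ∀ t, γ t ∉ spectrum ℂ A)
    (P Xt : Matrix (Fin n) (Fin n) ℂ)
    (hP : P = (2 * Real.pi * I)⁻¹ •
      ∫ t in (0:ℝ)..1, γ' t • ((γ t) • (1 : Matrix (Fin n) (Fin n) ℂ) - A)⁻¹)
    (hXt : Xt = (2 * Real.pi * I)⁻¹ •
      ∫ t in (0:ℝ)..1, γ' t •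
        (((γ t) • (1 : Matrix (Fin n) (Fin n) ℂ) - A)⁻¹ * X *
          ((γ t) • (1 : Matrix (Fin n) (Fin n) ℂ) - A)⁻¹)) :
    A * Xt - Xt * A = P * X - X * P := by
  have hres : ∀ t, ((γ t) • (1 : Matrix (Fin n) (Fin n) ℂ) - A)⁻¹ = resolvent A (γ t) := by
    intro t
    rw [nonsing_inv_eq_ringInverse, resolvent, Algebra.algebraMap_eq_smul_one]
  have hγc : Continuous γ := continuous_iff_continuousAt.mpr fun t ↦ (hγ t).continuousAt
  simp only [hres] at hP hXt
  rw [hXt, hP, mul_smul_comm, smul_mul_assoc, smul_mul_assoc, mul_smul_comm, ← smul_sub,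
    ← smul_sub, ← Ring.lie_def, ← Ring.lie_def,
    lie_integral_resolvent_mul_mul_resolvent A X hγc hγ'cont
      fun t ↦ Set.notMem_compl_iff.mp (hspec t)]

/-- Let `A` be a normal matrix and `γ : [0,1] → ℂ` a (parametrised) closed contour,
with derivative `γ'`, that does not meet the spectrum of `A`.  Let
`P = (1/2πi)∮_Γ (z − A)⁻¹ dz` be the Riesz spectral projector and
`X̃ = (1/2πi)∮_Γ (z−A)⁻¹ X (z−A)⁻¹ dz` the "twiddle" of a matrix `X`.
Then `[A, X̃] = [P, X]`. -/
theorem statement1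
    {n : ℕ} (A X : Matrix (Fin n) (Fin n) ℂ)
    (hA_normal : A * Aᴴ = Aᴴ * A)
    (γ γ' : ℝ → ℂ)
    (hγ : ∀ t, HasDerivAt γ (γ' t) t)
    (hγ'cont : Continuous γ')
    (hclosed : γ 0 = γ 1)
    (hspec : ∀ t, γ t ∉ spectrum ℂ A)
    (P Xt : Matrix (Fin n) (Fin n) ℂ)
    (hP : P = (2 * Real.pi * I)⁻¹ •
      ∫ t in (0:ℝ)..1, γ' t • ((γ t) • (1 : Matrix (Fin n) (Fin n) ℂ) - A)⁻¹)
    (hXt : Xt = (2 * Real.pi * I)⁻¹ •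
      ∫ t in (0:ℝ)..1, γ' t •
        (((γ t) • (1 : Matrix (Fin n) (Fin n) ℂ) - A)⁻¹ * X *
          ((γ t) • (1 : Matrix (Fin n) (Fin n) ℂ) - A)⁻¹)) :
    A * Xt - Xt * A = P * X - X * P :=
  statement1_general A X γ γ' hγ hγ'cont hspec P Xt hP hXt
end

section
/- Let A be a normal operator and suppose exactly one eigenvalue ω₀ of A lies inside the contour Γ, with associated spectral projector P. Then for any bounded X, the twiddled operator satisfies X̃ = (ω₀·1 − A)⁺ X P + P X (ω₀·1 − A)⁺, where ⁺ denotes the Moore–Penrose pseudoinverse. -/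
open scoped Matrix.Norms.L2Operator ComplexOrder
open Matrix

/-!
Write `N = ω₀·1 − A`, so that `N P = 0`, `B N = N B = 1 − P` and `B P = P B = 0`; these
identities already force `P N = P N (B N) = P (1 − P) N = 0`. An off-diagonal `X̃` is the sum
`P X̃ + X̃ P` of its two corners, and `[N, X̃] = X P − P X`. Multiplying this relation by `P` on
the left and `B` on the right isolates `P X̃ = P X B`; multiplying by `B` on the left and `P` on
the right isolates `X̃ P = B X P`.
-/

section Ring

variable {R : Type*} [Ring R] {P N B X Y : R}

theorem mul_eq_zero_of_mul_eq_one_sub (hP : IsIdempotentElem P) (hNP : N * P = 0)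
    (hNB : N * B = 1 - P) (hBN : B * N = 1 - P) : P * N = 0 :=
  calc P * N = P * N * P + P * N * (B * N) := by rw [hBN]; noncomm_ring
    _ = P * (N * P) + P * (N * B) * N := by simp only [mul_assoc]
    _ = 0 := by rw [hNP, hNB, hP.mul_one_sub_self]; simp

theorem eq_mul_add_mul_of_corners_eq_zero (hPP : P * Y * P = 0)
    (hQQ : (1 - P) * Y * (1 - P) = 0) : Y = P * Y + Y * P :=
  calc Y = P * Y + Y * P - P * Y * P + (1 - P) * Y * (1 - P) := by noncomm_ring
    _ = P * Y + Y * P := by rw [hPP, hQQ, sub_zero, add_zero]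

theorem idempotent_mul_eq_of_commutator_eq (hP : IsIdempotentElem P) (hPN : P * N = 0)
    (hNB : N * B = 1 - P) (hPB : P * B = 0) (hPP : P * Y * P = 0)
    (hY : N * Y - Y * N = X * P - P * X) : P * Y = P * X * B :=
  calc P * Y = P * Y * (N * B) - P * N * Y * B := by rw [hNB, hPN, mul_one_sub, hPP]; simp
    _ = P * (P * X - X * P) * B := by rw [← neg_sub (X * P), ← hY]; noncomm_ring
    _ = P * P * X * B - P * X * (P * B) := by noncomm_ring
    _ = P * X * B := by rw [hPB, hP.eq]; simp

theorem mul_idempotent_eq_of_commutator_eq (hP : IsIdempotentElem P) (hNP : N * P = 0)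
    (hBN : B * N = 1 - P) (hBP : B * P = 0) (hPP : P * Y * P = 0)
    (hY : N * Y - Y * N = X * P - P * X) : Y * P = B * X * P :=
  calc Y * P = B * N * Y * P - B * Y * (N * P) := by
        rw [hBN, hNP, mul_zero, sub_zero, one_sub_mul, sub_mul, hPP, sub_zero]
    _ = B * (X * P - P * X) * P := by rw [← hY]; noncomm_ring
    _ = B * X * (P * P) - B * P * X * P := by noncomm_ring
    _ = B * X * P := by rw [hP.eq, hBP]; simp

end Ring

theorem statement4_general
    {n : ℕ} (A P X Xt B : Matrix (Fin n) (Fin n) ℂ) (ω₀ : ℂ)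
    -- P is the orthogonal projector onto the eigenspace of ω₀
    (hP_proj : P * P = P)
    (hAP : A * P = ω₀ • P)
    -- X̃ is the off-diagonal solution of [A, X̃] = [P, X]
    (hXt_off : P * Xt * P = 0 ∧ (1 - P) * Xt * (1 - P) = 0)
    (hXt : A * Xt - Xt * A = P * X - X * P)
    -- B is the Moore–Penrose pseudoinverse of (ω₀·1 − A)
    (hB₁ : B * (ω₀ • (1 : Matrix (Fin n) (Fin n) ℂ) - A) = 1 - P)
    (hB₂ : (ω₀ • (1 : Matrix (Fin n) (Fin n) ℂ) - A) * B = 1 - P)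
    (hB₃ : B * P = 0) (hB₄ : P * B = 0) :
    Xt = B * X * P + P * X * B := by
  set N := ω₀ • (1 : Matrix (Fin n) (Fin n) ℂ) - A
  have hNP : N * P = 0 := by rw [sub_mul, smul_mul_assoc, one_mul, hAP, sub_self]
  have hPN : P * N = 0 := mul_eq_zero_of_mul_eq_one_sub hP_proj hNP hB₂ hB₁
  have hN : N * Xt - Xt * N = X * P - P * X := by
    rw [← neg_sub (P * X) (X * P), ← hXt]
    simp only [N, sub_mul, mul_sub, smul_mul_assoc, mul_smul_comm, one_mul, mul_one]
    abel
  rw [eq_mul_add_mul_of_corners_eq_zero hXt_off.1 hXt_off.2,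
    idempotent_mul_eq_of_commutator_eq hP_proj hPN hB₂ hB₄ hXt_off.1 hN,
    mul_idempotent_eq_of_commutator_eq hP_proj hNP hB₁ hB₃ hXt_off.1 hN, add_comm]

/-- Let `A` be normal with a single eigenvalue `ω₀` inside the contour, `P` the
orthogonal projector onto the eigenspace of `ω₀`, and `X̃` the (unique)
off-diagonal solution of `[A, X̃] = [P, X]`.  Let `B = (ω₀·1 − A)⁺` be the
Moore–Penrose pseudoinverse, characterised here by
`B (ω₀·1 − A) = (ω₀·1 − A) B = 1 − P` and `B P = P B = 0`.
Then `X̃ = (ω₀·1 − A)⁺ X P + P X (ω₀·1 − A)⁺`. -/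
theorem statement4
    {n : ℕ} (A P X Xt B : Matrix (Fin n) (Fin n) ℂ) (ω₀ : ℂ)
    (hA_normal : A * Aᴴ = Aᴴ * A)
    (hω₀ : ω₀ ∈ spectrum ℂ A)
    -- P is the orthogonal projector onto the eigenspace of ω₀
    (hP_proj : P * P = P) (hP_herm : P.IsHermitian)
    (hAP : A * P = ω₀ • P)
    (hP_full : ∀ v : Fin n → ℂ, A.mulVec v = ω₀ • v → P.mulVec v = v)
    -- X̃ is the off-diagonal solution of [A, X̃] = [P, X]
    (hXt_off : P * Xt * P = 0 ∧ (1 - P) * Xt * (1 - P) = 0)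
    (hXt : A * Xt - Xt * A = P * X - X * P)
    -- B is the Moore–Penrose pseudoinverse of (ω₀·1 − A)
    (hB₁ : B * (ω₀ • (1 : Matrix (Fin n) (Fin n) ℂ) - A) = 1 - P)
    (hB₂ : (ω₀ • (1 : Matrix (Fin n) (Fin n) ℂ) - A) * B = 1 - P)
    (hB₃ : B * P = 0) (hB₄ : P * B = 0) :
    Xt = B * X * P + P * X * B :=
  statement4_general A P X Xt B ω₀ hP_proj hAP hXt_off hXt hB₁ hB₂ hB₃ hB₄
end

section
/- Let H be a Hermitian operator with ‖H‖ ≤ 1 and define the qubitised unitary U = |y−⟩⟨y−| ⊗ (H + i√(1−H²)) + |y+⟩⟨y+| ⊗ (H − i√(1−H²)), where |y±⟩ = (1/√2)(1, ±i)ᵀ. Then U is unitary, its spectrum is { α ± i√(1−α²) : α ∈ σ(H) }, and for any α₀, α₁ ∈ [−1,1], |(α₀ + i√(1−α₀²)) − (α₁ + i√(1−α₁²))| ≥ |α₀ − α₁| (and similarly with both minus signs); hence the spectral gap of U is at least that of H. -/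
/-!
Diagonalise `H = W D W*` with `D = diag αⱼ`. Since `S ≥ 0` and `S² = 1 - H² = W (1 - D²) W*`,
uniqueness of positive square roots gives `S = W diag √(1 - αⱼ²) W*`, so
`H ± iS = W diag (αⱼ ± i√(1 - αⱼ²)) W*`. The projectors `|y∓⟩⟨y∓|` are `V Eₖₖ V*` for the unitary
`V` with columns `|y−⟩, |y+⟩`, hence `U = (V ⊗ W) diag (αⱼ ± i√(1 - αⱼ²)) (V ⊗ W)*` is a unitary
conjugate of a diagonal matrix with unimodular entries. The distance bound is `|Re z| ≤ |z|`.
-/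

open scoped Matrix.Norms.L2Operator ComplexOrder Kronecker
open Matrix Complex
open scoped MatrixOrder
open Unitary

section Hermitian
variable {ι : Type*} [Fintype ι] [DecidableEq ι] {H S : Matrix ι ι ℂ}

lemma Matrix.IsHermitian.eigenvalues_sq_le_one (hH : H.IsHermitian) (h : 0 ≤ 1 - H * H) (j : ι) :
    hH.eigenvalues j ^ 2 ≤ 1 := by
  have hdiag : conjStarAlgAut ℂ _ (star hH.eigenvectorUnitary) (1 - H * H) =
      diagonal fun j => ((1 - hH.eigenvalues j ^ 2 : ℝ) : ℂ) := by
    rw [map_sub, map_one, map_mul, conjStarAlgAut_star_eigenvectorUnitary, diagonal_mul_diagonal,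
      ← diagonal_one, diagonal_sub]
    refine congrArg diagonal (funext fun j => ?_)
    simp [sq]
  have hj : (0 : ℝ) ≤ 1 - hH.eigenvalues j ^ 2 := by
    exact_mod_cast posSemidef_diagonal_iff.mp (hdiag ▸ map_nonneg _ h).posSemidef j
  linarith

lemma Matrix.IsHermitian.eq_conjStarAlgAut_diagonal_sqrt (hH : H.IsHermitian) (hS : 0 ≤ S)
    (hS2 : S * S = 1 - H * H) :
    S = conjStarAlgAut ℂ _ hH.eigenvectorUnitary
      (diagonal fun j => (√(1 - hH.eigenvalues j ^ 2) : ℂ)) := by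
  set T : Matrix ι ι ℂ := diagonal fun j => (√(1 - hH.eigenvalues j ^ 2) : ℂ)
  have hT : 0 ≤ T := (posSemidef_diagonal_iff.mpr fun j => by
    exact_mod_cast Real.sqrt_nonneg _).nonneg
  have hd : ∀ j, hH.eigenvalues j ^ 2 ≤ 1 :=
    hH.eigenvalues_sq_le_one (hS2 ▸ (IsSelfAdjoint.of_nonneg hS).mul_self_nonneg)
  have hTT : T * T = 1 - diagonal (RCLike.ofReal ∘ hH.eigenvalues) *
      diagonal (RCLike.ofReal ∘ hH.eigenvalues) := by
    rw [diagonal_mul_diagonal, diagonal_mul_diagonal, ← diagonal_one, diagonal_sub]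
    refine congrArg diagonal (funext fun j => ?_)
    rw [← ofReal_mul, Real.mul_self_sqrt (by linarith [hd j])]
    simp [sq]
  refine (CFC.sq_eq_sq_iff S _ hS (map_nonneg _ hT)).mp ?_
  rw [sq, sq, ← map_mul, hTT, map_sub, map_one, map_mul, ← hH.spectral_theorem, hS2]

lemma Matrix.IsHermitian.add_smul_eq_conjStarAlgAut_diagonal (hH : H.IsHermitian) (hS : 0 ≤ S)
    (hS2 : S * S = 1 - H * H) (c : ℂ) :
    H + c • S = conjStarAlgAut ℂ _ hH.eigenvectorUnitary
      (diagonal fun j => hH.eigenvalues j + c * √(1 - hH.eigenvalues j ^ 2)) := by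
  conv_lhs => rw [hH.spectral_theorem, hH.eq_conjStarAlgAut_diagonal_sqrt hS hS2]
  rw [← map_smul, ← map_add, ← diagonal_smul, diagonal_add]
  rfl

end Hermitian

lemma kronecker_mul_diagonal_mul_conjTranspose {R m n : Type*} [CommSemiring R] [StarRing R]
    [Fintype m] [Fintype n] [DecidableEq m] [DecidableEq n]
    (V : Matrix m m R) (W : Matrix n n R) (f : m × n → R) :
    (V ⊗ₖ W) * diagonal f * (V ⊗ₖ W)ᴴ =
      ∑ k, vecMulVec (Vᵀ k) (star (Vᵀ k)) ⊗ₖ (W * diagonal (fun j => f (k, j)) * Wᴴ) := by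
  ext ⟨i, j⟩ ⟨i', j'⟩
  simp only [mul_apply, Fintype.sum_prod_type, vecMulVec_apply, Matrix.sum_apply, Finset.mul_sum,
    diagonal_apply, kroneckerMap_apply, conjTranspose_apply, transpose_apply, Pi.star_apply,
    Prod.ext_iff, ite_and, mul_ite, mul_zero, Finset.sum_ite_irrel, Finset.sum_ite_eq',
    Finset.mem_univ, if_true, Finset.sum_const_zero, star_mul']
  exact Finset.sum_congr rfl fun k _ => Finset.sum_congr rfl fun l _ => by ring

/-- The columns are `|y−⟩` and `|y+⟩`. -/
noncomputable def pauliYEigenbasis : Matrix (Fin 2) (Fin 2) ℂ :=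
  (of ![![1 / (√2 : ℂ), -I / √2], ![1 / (√2 : ℂ), I / √2]])ᵀ

lemma pauliYEigenbasis_mem_unitaryGroup : pauliYEigenbasis ∈ unitaryGroup (Fin 2) ℂ := by
  have h : ((√2 : ℝ) : ℂ)⁻¹ * ((√2 : ℝ) : ℂ)⁻¹ = 2⁻¹ := by
    rw [← mul_inv, ← ofReal_mul, Real.mul_self_sqrt zero_le_two, ofReal_ofNat]
  rw [mem_unitaryGroup_iff']
  ext i j
  fin_cases i <;> fin_cases j <;>
    norm_num [pauliYEigenbasis, mul_apply, Fin.sum_univ_two, div_eq_mul_inv,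
      mul_mul_mul_comm _ ((√2 : ℝ) : ℂ)⁻¹, h]

lemma diagonal_mem_unitaryGroup {ι : Type*} [Fintype ι] [DecidableEq ι] {g : ι → ℂ}
    (hg : ∀ i, ‖g i‖ = 1) : diagonal g ∈ unitaryGroup ι ℂ := by
  rw [mem_unitaryGroup_iff', star_eq_conjTranspose, diagonal_conjTranspose, diagonal_mul_diagonal,
    ← diagonal_one]
  refine congrArg diagonal (funext fun i => ?_)
  simp [conj_mul', hg i]

noncomputable def qubitPhase (α : ℝ) (k : Fin 2) : ℂ := α + ![I, -I] k * √(1 - α ^ 2)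

lemma norm_qubitPhase {α : ℝ} (hα : α ^ 2 ≤ 1) (k : Fin 2) : ‖qubitPhase α k‖ = 1 := by
  have key : α ^ 2 + √(1 - α ^ 2) ^ 2 = 1 := by rw [Real.sq_sqrt (by linarith)]; ring
  match k with
  | 0 =>
    have : qubitPhase α 0 = α + ((√(1 - α ^ 2) : ℝ) : ℂ) * I := by simp [qubitPhase, mul_comm]
    rw [this, norm_add_mul_I, key, Real.sqrt_one]
  | 1 =>
    have : qubitPhase α 1 = α + ((-√(1 - α ^ 2) : ℝ) : ℂ) * I := by
      simp only [qubitPhase, cons_val_one, cons_val_fin_one, ofReal_neg]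
      ring
    rw [this, norm_add_mul_I, neg_sq, key, Real.sqrt_one]

theorem statement11_general {n : ℕ} (H S : Matrix (Fin n) (Fin n) ℂ)
    (hH : H.IsHermitian)
    (hS : S.PosSemidef) (hS2 : S * S = 1 - H * H)
    (U : Matrix (Fin 2 × Fin n) (Fin 2 × Fin n) ℂ)
    (hU : U =
      (vecMulVec ((![1/(Real.sqrt 2 : ℂ), -I/Real.sqrt 2])) (star (![1/(Real.sqrt 2 : ℂ), -I/Real.sqrt 2])))
        ⊗ₖ (H + I • S) +
      (vecMulVec ((![1/(Real.sqrt 2 : ℂ), I/Real.sqrt 2])) (star (![1/(Real.sqrt 2 : ℂ), I/Real.sqrt 2])))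
        ⊗ₖ (H - I • S)) :
    U ∈ Matrix.unitaryGroup (Fin 2 × Fin n) ℂ ∧
    spectrum ℂ U = {z : ℂ | ∃ α : ℝ, (α : ℂ) ∈ spectrum ℂ H ∧
      (z = α + I * Real.sqrt (1 - α ^ 2) ∨ z = α - I * Real.sqrt (1 - α ^ 2))} ∧
    (∀ α₀ ∈ Set.Icc (-(1:ℝ)) 1, ∀ α₁ ∈ Set.Icc (-(1:ℝ)) 1,
      |α₀ - α₁| ≤ ‖(α₀ + I * Real.sqrt (1 - α₀ ^ 2)) -
        (α₁ + I * Real.sqrt (1 - α₁ ^ 2))‖ ∧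
      |α₀ - α₁| ≤ ‖(α₀ - I * Real.sqrt (1 - α₀ ^ 2)) -
        (α₁ - I * Real.sqrt (1 - α₁ ^ 2))‖) := by
  have hd : ∀ j, hH.eigenvalues j ^ 2 ≤ 1 :=
    hH.eigenvalues_sq_le_one (hS2 ▸ IsSelfAdjoint.mul_self_nonneg hS.isHermitian)
  have hQ : pauliYEigenbasis ⊗ₖ (hH.eigenvectorUnitary : Matrix (Fin n) (Fin n) ℂ) ∈
      unitary (Matrix (Fin 2 × Fin n) (Fin 2 × Fin n) ℂ) :=
    kronecker_mem_unitary pauliYEigenbasis_mem_unitaryGroup hH.eigenvectorUnitary.2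
  have hblock (k : Fin 2) :
      (hH.eigenvectorUnitary : Matrix (Fin n) (Fin n) ℂ) *
        diagonal (fun j => qubitPhase (hH.eigenvalues j) k) *
        (hH.eigenvectorUnitary : Matrix (Fin n) (Fin n) ℂ)ᴴ = H + ![I, -I] k • S := by
    rw [hH.add_smul_eq_conjStarAlgAut_diagonal hS.nonneg hS2, conjStarAlgAut_apply,
      star_eq_conjTranspose]
    rfl
  have hUQ : U = conjStarAlgAut ℂ _ ⟨_, hQ⟩
      (diagonal fun p => qubitPhase (hH.eigenvalues p.2) p.1) := by
    rw [conjStarAlgAut_apply, Subtype.coe_mk, star_eq_conjTranspose,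
      kronecker_mul_diagonal_mul_conjTranspose, Fin.sum_univ_two, hblock, hblock, hU,
      sub_eq_add_neg, ← neg_smul]
    rfl
  refine ⟨?_, ?_, fun α₀ _ α₁ _ => ⟨?_, ?_⟩⟩
  · rw [hUQ]
    exact map_mem _ (diagonal_mem_unitaryGroup fun p => norm_qubitPhase (hd p.2) p.1)
  · rw [hUQ, AlgEquiv.spectrum_eq, spectrum_diagonal, hH.spectrum_eq_image_range]
    ext z
    simp [qubitPhase, Fin.exists_fin_two, sub_eq_add_neg, eq_comm (a := z), exists_or]
  · simpa using abs_re_le_norm ((α₀ + I * √(1 - α₀ ^ 2)) - (α₁ + I * √(1 - α₁ ^ 2)))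
  · simpa using abs_re_le_norm ((α₀ - I * √(1 - α₀ ^ 2)) - (α₁ - I * √(1 - α₁ ^ 2)))

/-- qubitisation.
For Hermitian `H` with `‖H‖ ≤ 1` and `S = √(1 − H²)` (the positive semidefinite
square root), the qubitised operator
`U = |y−⟩⟨y−| ⊗ (H + iS) + |y+⟩⟨y+| ⊗ (H − iS)` is unitary, its spectrum is
`{α ± i√(1−α²) : α ∈ σ(H)}`, and the eigenvalue distances can only increase:
`|(α₀ ± i√(1−α₀²)) − (α₁ ± i√(1−α₁²))| ≥ |α₀ − α₁|` for `α₀, α₁ ∈ [−1,1]`. -/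
theorem statement11 {n : ℕ} (H S : Matrix (Fin n) (Fin n) ℂ)
    (hH : H.IsHermitian) (hHnorm : ‖H‖ ≤ 1)
    (hS : S.PosSemidef) (hS2 : S * S = 1 - H * H)
    (U : Matrix (Fin 2 × Fin n) (Fin 2 × Fin n) ℂ)
    (hU : U =
      (vecMulVec ((![1/(Real.sqrt 2 : ℂ), -I/Real.sqrt 2])) (star (![1/(Real.sqrt 2 : ℂ), -I/Real.sqrt 2])))
        ⊗ₖ (H + I • S) +
      (vecMulVec ((![1/(Real.sqrt 2 : ℂ), I/Real.sqrt 2])) (star (![1/(Real.sqrt 2 : ℂ), I/Real.sqrt 2])))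
        ⊗ₖ (H - I • S)) :
    U ∈ Matrix.unitaryGroup (Fin 2 × Fin n) ℂ ∧
    spectrum ℂ U = {z : ℂ | ∃ α : ℝ, (α : ℂ) ∈ spectrum ℂ H ∧
      (z = α + I * Real.sqrt (1 - α ^ 2) ∨ z = α - I * Real.sqrt (1 - α ^ 2))} ∧
    (∀ α₀ ∈ Set.Icc (-(1:ℝ)) 1, ∀ α₁ ∈ Set.Icc (-(1:ℝ)) 1,
      |α₀ - α₁| ≤ ‖(α₀ + I * Real.sqrt (1 - α₀ ^ 2)) -
        (α₁ + I * Real.sqrt (1 - α₁ ^ 2))‖ ∧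
      |α₀ - α₁| ≤ ‖(α₀ - I * Real.sqrt (1 - α₀ ^ 2)) -
        (α₁ - I * Real.sqrt (1 - α₁ ^ 2))‖) :=
  statement11_general H S hH hS hS2 U hU
end

section
/- Let H be a Hermitian operator with ‖H‖ ≤ 1, with a positive lower bound √(1 − ‖H‖²) > 0. If H(s) is a differentiable path of such operators, then ‖ d/ds √(1 − H(s)²) ‖ ≤ ‖H'(s)‖ / √(1 − ‖H(s)‖²). -/
open scoped Matrix.Norms.L2Operator ComplexOrder
open Matrix

/-- The positive semidefinite square root of a positive semidefinite matrix
(the definition of `Matrix.PosSemidef.sqrt` in the older Mathlib, since removed). -/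
noncomputable def Matrix.PosSemidef.sqrt {n : Type*} [Fintype n] {𝕜 : Type*} [RCLike 𝕜]
    [DecidableEq n] {A : Matrix n n 𝕜} (hA : A.PosSemidef) : Matrix n n 𝕜 :=
  hA.1.eigenvectorUnitary.1 * diagonal ((↑) ∘ (√·) ∘ hA.1.eigenvalues) *
  (star hA.1.eigenvectorUnitary : Matrix n n 𝕜)

/-!
Write `S(s) = √(1 - H(s)²)` and `c = √(1 - ‖H(s₀)‖²)`. Differentiating `S² = 1 - H²` gives the
Sylvester equation `D S + S D = -(H' H + H H')`, whose right-hand side has norm at most `2 ‖H'‖`.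
Since `H² ≤ ‖H‖²` and the square root is operator monotone, `S ≥ c`. Testing the equation on a
unit eigenvector `v` of the Hermitian matrix `D` whose eigenvalue `μ` has `|μ| = ‖D‖` gives
`⟪(D S + S D) v, v⟫ = 2 μ ⟪S v, v⟫`, of modulus at least `2 c ‖D‖`.
-/

open scoped MatrixOrder InnerProductSpace

theorem HasDerivAt.isSelfAdjoint {𝕜 F : Type*} [NontriviallyNormedField 𝕜] [StarRing 𝕜]
    [TrivialStar 𝕜] [NormedAddCommGroup F] [NormedSpace 𝕜 F] [StarAddMonoid F] [StarModule 𝕜 F]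
    [ContinuousStar F] {f : 𝕜 → F} {f' : F} {x : 𝕜} (hf : HasDerivAt f f' x)
    (hsa : ∀ t, IsSelfAdjoint (f t)) : IsSelfAdjoint f' := by
  have hstar := hf.star
  simp only [(hsa _).star_eq] at hstar
  exact hstar.unique hf

theorem CStarAlgebra.algebraMap_sqrt_one_sub_norm_sq_le {A : Type*} [CStarAlgebra A]
    [PartialOrder A] [StarOrderedRing A] {a : A} (ha : IsSelfAdjoint a) (h : ‖a‖ ≤ 1) :
    algebraMap ℝ A √(1 - ‖a‖ ^ 2) ≤ CFC.sqrt (1 - a * a) := by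
  have h0 : 0 ≤ 1 - ‖a‖ ^ 2 := by nlinarith [norm_nonneg a]
  have hsq : algebraMap ℝ A (1 - ‖a‖ ^ 2) ≤ 1 - a * a := by
    have := CStarAlgebra.star_mul_le_algebraMap_norm_sq (a := a)
    rw [ha.star_eq] at this
    rw [map_sub, map_one]
    exact sub_le_sub_left this 1
  calc algebraMap ℝ A √(1 - ‖a‖ ^ 2) = CFC.sqrt (algebraMap ℝ A (1 - ‖a‖ ^ 2)) := by
        refine (CFC.sqrt_unique ?_ (algebraMap_nonneg A (Real.sqrt_nonneg _))).symm
        rw [← map_mul, Real.mul_self_sqrt h0]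
    _ ≤ CFC.sqrt (1 - a * a) := CFC.sqrt_le_sqrt _ _ hsq

theorem ContinuousLinearMap.two_mul_mul_abs_le_norm_mul_add_mul {𝕜 E : Type*} [RCLike 𝕜]
    [NormedAddCommGroup E] [InnerProductSpace 𝕜 E] {T S : E →L[𝕜] E}
    (hT : (T : E →ₗ[𝕜] E).IsSymmetric) {c : ℝ} (hS : ∀ x, c * ‖x‖ ^ 2 ≤ RCLike.re ⟪S x, x⟫_𝕜)
    {μ : ℝ} {v : E} (hv : ‖v‖ = 1) (hTv : T v = (μ : 𝕜) • v) :
    2 * c * |μ| ≤ ‖T * S + S * T‖ := by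
  set r := RCLike.re ⟪S v, v⟫_𝕜
  have hr : c ≤ r := by simpa [hv] using hS v
  have hform : RCLike.re ⟪(T * S + S * T) v, v⟫_𝕜 = 2 * μ * r := by
    have hTS : ⟪T (S v), v⟫_𝕜 = (μ : 𝕜) * ⟪S v, v⟫_𝕜 := by
      rw [← inner_smul_right, ← hTv]
      exact hT (S v) v
    have hST : ⟪S (T v), v⟫_𝕜 = (μ : 𝕜) * ⟪S v, v⟫_𝕜 := by
      rw [hTv, map_smul, inner_smul_left, RCLike.conj_ofReal]
    rw [_root_.add_apply, mul_apply_eq_comp, mul_apply_eq_comp, inner_add_left, hTS, hST, map_add,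
      RCLike.re_ofReal_mul]
    ring
  calc 2 * c * |μ| ≤ 2 * |μ| * |r| := by nlinarith [abs_nonneg μ, le_abs_self r]
    _ = |RCLike.re ⟪(T * S + S * T) v, v⟫_𝕜| := by rw [hform, abs_mul, abs_mul, abs_two]
    _ ≤ ‖⟪(T * S + S * T) v, v⟫_𝕜‖ := RCLike.abs_re_le_norm _
    _ ≤ ‖(T * S + S * T) v‖ * ‖v‖ := norm_inner_le_norm _ _
    _ ≤ ‖T * S + S * T‖ := by simpa [hv] using (T * S + S * T).le_opNorm v

namespace Matrix

variable {n : Type*} [Fintype n] [DecidableEq n]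

theorem PosSemidef.sqrt_eq_cfcSqrt {A : Matrix n n ℂ} (hA : A.PosSemidef) :
    hA.sqrt = CFC.sqrt A := by
  rw [CFC.sqrt_eq_real_sqrt A hA.nonneg, cfcₙ_eq_cfc, hA.1.cfc_eq]
  rfl

theorem IsHermitian.exists_eigenvector_abs_eigenvalue_eq_norm [Nonempty n] {A : Matrix n n ℂ}
    (hA : A.IsHermitian) :
    ∃ (μ : ℝ) (v : EuclideanSpace ℂ n), ‖v‖ = 1 ∧ toEuclideanCLM (𝕜 := ℂ) A v = (μ : ℂ) • v ∧
      |μ| = ‖A‖ := by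
  obtain ⟨i, hi⟩ : ∃ i, |hA.eigenvalues i| = ‖A‖ := by
    rcases CStarAlgebra.norm_or_neg_norm_mem_spectrum hA.isSelfAdjoint with h | h <;>
      obtain ⟨i, hi⟩ := hA.spectrum_real_eq_range_eigenvalues ▸ h <;> exact ⟨i, by simp [hi]⟩
  refine ⟨hA.eigenvalues i, hA.eigenvectorBasis i, hA.eigenvectorBasis.orthonormal.1 i, ?_, hi⟩
  ext j
  simp [ofLp_toEuclideanCLM, hA.mulVec_eigenvectorBasis]

theorem mul_norm_sq_le_re_inner_toEuclideanCLM {S : Matrix n n ℂ} {c : ℝ}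
    (hS : algebraMap ℝ _ c ≤ S) (x : EuclideanSpace ℂ n) :
    c * ‖x‖ ^ 2 ≤ RCLike.re ⟪toEuclideanCLM (𝕜 := ℂ) S x, x⟫_ℂ := by
  have hpos := (isPositive_toEuclideanLin_iff.mpr (le_iff.mp hS)).re_inner_nonneg_left x
  have hc : toEuclideanLin (algebraMap ℝ (Matrix n n ℂ) c) x = (c : ℂ) • x := by
    rw [Algebra.algebraMap_eq_smul_one, RCLike.real_smul_eq_coe_smul (K := ℂ), map_smul]
    simp
  rw [map_sub, LinearMap.sub_apply, hc, inner_sub_left, map_sub, sub_nonneg] at hpos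
  change _ ≤ RCLike.re ⟪toEuclideanLin S x, x⟫_ℂ
  simpa [← inner_self_eq_norm_sq (𝕜 := ℂ)] using hpos

theorem two_mul_mul_norm_le_norm_mul_add_mul {D S : Matrix n n ℂ} (hD : D.IsHermitian) {c : ℝ}
    (hS : algebraMap ℝ _ c ≤ S) : 2 * c * ‖D‖ ≤ ‖D * S + S * D‖ := by
  cases isEmpty_or_nonempty n
  · simp [Subsingleton.elim D 0]
  obtain ⟨μ, v, hv, hDv, hμ⟩ := hD.exists_eigenvector_abs_eigenvalue_eq_norm
  rw [← hμ, cstar_norm_def, map_add, map_mul, map_mul]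
  refine ContinuousLinearMap.two_mul_mul_abs_le_norm_mul_add_mul ?_
    (mul_norm_sq_le_re_inner_toEuclideanCLM hS) hv hDv
  rwa [coe_toEuclideanCLM_eq_toEuclideanLin, isSymmetric_toEuclideanLin_iff]

end Matrix

/-- If `H s` is a differentiable path of Hermitian operators with `‖H s‖ < 1`
(so `√(1 − ‖H s‖²) > 0`), and `D` is the derivative at `s₀` of the positive
square root `√(1 − H(s)²)`, then `‖D‖ ≤ ‖H'(s₀)‖ / √(1 − ‖H s₀‖²)`. -/
theorem statement14 {n : ℕ} (H : ℝ → Matrix (Fin n) (Fin n) ℂ)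
    (hH_herm : ∀ s, (H s).IsHermitian)
    (hH_norm : ∀ s, ‖H s‖ < 1)
    (h1 : ∀ s, (1 - H s * H s).PosSemidef)
    (s₀ : ℝ) (H' D : Matrix (Fin n) (Fin n) ℂ)
    (hH' : HasDerivAt H H' s₀)
    (hD : HasDerivAt (fun s => (h1 s).sqrt) D s₀) :
    ‖D‖ ≤ ‖H'‖ / Real.sqrt (1 - ‖H s₀‖ ^ 2) := by
  set c := √(1 - ‖H s₀‖ ^ 2)
  have hHle : ‖H s₀‖ ≤ 1 := (hH_norm s₀).le
  have hc : 0 < c := Real.sqrt_pos.mpr (by nlinarith [norm_nonneg (H s₀), hH_norm s₀])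
  have hD_herm : D.IsHermitian := hD.isSelfAdjoint fun s =>
    (h1 s).sqrt_eq_cfcSqrt ▸ (CFC.sqrt_nonneg _).isSelfAdjoint
  set S := (h1 s₀).sqrt with hS_def
  have hS : algebraMap ℝ _ c ≤ S := by
    rw [hS_def, (h1 s₀).sqrt_eq_cfcSqrt]
    exact CStarAlgebra.algebraMap_sqrt_one_sub_norm_sq_le (hH_herm s₀).isSelfAdjoint hHle
  have hsylvester : D * S + S * D = -(H' * H s₀ + H s₀ * H') := by
    have hsq : HasDerivAt (fun s => (h1 s).sqrt * (h1 s).sqrt) (D * S + S * D) s₀ := hD.mul hD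
    simp only [Matrix.PosSemidef.sqrt_eq_cfcSqrt, CFC.sqrt_mul_sqrt_self _ (h1 _).nonneg] at hsq
    simpa using hsq.unique ((hasDerivAt_const s₀ 1).sub (hH'.mul hH'))
  have hrhs : ‖H' * H s₀ + H s₀ * H'‖ ≤ 2 * ‖H'‖ := by
    calc ‖H' * H s₀ + H s₀ * H'‖ ≤ ‖H'‖ * ‖H s₀‖ + ‖H s₀‖ * ‖H'‖ :=
          (norm_add_le _ _).trans (add_le_add (norm_mul_le _ _) (norm_mul_le _ _))
      _ ≤ 2 * ‖H'‖ := by nlinarith [norm_nonneg H']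
  have hkey := two_mul_mul_norm_le_norm_mul_add_mul hD_herm hS
  rw [hsylvester, norm_neg] at hkey
  rw [le_div_iff₀ hc]
  linarith
end

section
/- Let g(s) = √(1 − 4(1 − M/N) s(1−s)) for 0 < M ≤ N with M/N ≤ 1/4. Then for every p > 1, ∫₀¹ g(s)^{−p} ds = O((N/M)^{(p−1)/2}), i.e. there is a constant C_p independent of M, N such that ∫₀¹ g(s)^{−p} ds ≤ C_p (N/M)^{(p−1)/2}. Moreover for p = 1, ∫₀¹ g(s)^{−1} ds = O(log(N/M)). -/
/-!
Writing `m = M/N`, the radicand is `m + (1 - m)(1 - 2s)²`, so on `[0, 1]` the gap dominates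
`max (√m) |1 - 2s|`. For `φ` decreasing on `(0, ∞)` this gives, after `u = |1 - 2s|`,
`∫₀¹ φ(g) ≤ ∫₀¹ φ(max (√m) u) du = √m φ(√m) + ∫_{√m}^1 φ`.
For `φ(x) = x^{-p}` the right side is at most `p/(p-1) · m^{-(p-1)/2}`, for `φ(x) = 1/x` it is
`1 + log(1/m)/2`, and `log(1/m) ≥ log 4 > 1` absorbs the constant.
-/

open Real Set intervalIntegral

noncomputable def groverGap (m s : ℝ) : ℝ := √(1 - 4 * (1 - m) * s * (1 - s))

lemma groverGap_radicand_eq (m s : ℝ) :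
    1 - 4 * (1 - m) * s * (1 - s) = m + (1 - m) * (1 - 2 * s) ^ 2 := by ring

lemma continuous_groverGap (m : ℝ) : Continuous (groverGap m) := by
  unfold groverGap; fun_prop

lemma groverGap_pos {m : ℝ} (hm : 0 < m) (hm1 : m ≤ 1) (s : ℝ) : 0 < groverGap m s :=
  sqrt_pos.2 <| by rw [groverGap_radicand_eq]; nlinarith [sq_nonneg (1 - 2 * s)]

lemma max_sqrt_abs_le_groverGap {m s : ℝ} (hm : 0 ≤ m) (hm1 : m ≤ 1)
    (hs : s ∈ Icc (0 : ℝ) 1) :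
    max √m |1 - 2 * s| ≤ groverGap m s := by
  have hsq : (1 - 2 * s) ^ 2 ≤ 1 := by nlinarith [hs.1, hs.2]
  unfold groverGap
  rw [groverGap_radicand_eq]
  exact max_le (sqrt_le_sqrt (by nlinarith [sq_nonneg (1 - 2 * s)]))
    (abs_le_sqrt (by nlinarith))

lemma integral_comp_abs_one_sub_two_mul {F : ℝ → ℝ} (hF : Continuous F) :
    ∫ s in (0 : ℝ)..1, F |1 - 2 * s| = ∫ u in (0 : ℝ)..1, F u := by
  have hsub : ∫ s in (0 : ℝ)..1, F |1 - 2 * s| = 2⁻¹ * ∫ x in (-1 : ℝ)..1, F |x| := by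
    rw [integral_comp_sub_mul (fun x => F |x|) two_ne_zero]; norm_num
  have hF' : Continuous fun x => F |x| := hF.comp continuous_abs
  have hpos : ∫ x in (0 : ℝ)..1, F |x| = ∫ u in (0 : ℝ)..1, F u :=
    integral_congr fun x hx => by
      rw [uIcc_of_le zero_le_one] at hx; simp only [abs_of_nonneg hx.1]
  have hneg : ∫ x in (-1 : ℝ)..0, F |x| = ∫ x in (0 : ℝ)..1, F |x| := by
    simpa only [abs_neg, neg_zero] using
      (integral_comp_neg (a := 0) (b := 1) fun x => F |x|).symm
  rw [hsub, ← integral_add_adjacent_intervals (hF'.intervalIntegrable _ 0)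
    (hF'.intervalIntegrable 0 _), hneg, hpos]
  ring

lemma integral_comp_max_eq {φ : ℝ → ℝ} {r : ℝ} (hr : 0 < r) (hr1 : r ≤ 1)
    (hφ : ContinuousOn φ (Ioi 0)) :
    ∫ u in (0 : ℝ)..1, φ (max r u) = r * φ r + ∫ u in r..1, φ u := by
  have hcont : Continuous fun u => φ (max r u) :=
    hφ.comp_continuous (continuous_const.max continuous_id) fun u =>
      hr.trans_le (le_max_left r u)
  rw [← integral_add_adjacent_intervals (hcont.intervalIntegrable 0 r)
    (hcont.intervalIntegrable r 1)]
  congr 1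
  · rw [integral_congr (g := fun _ => φ r) fun u hu => ?_, integral_const, smul_eq_mul,
      sub_zero]
    rw [uIcc_of_le hr.le] at hu
    simp only [max_eq_left hu.2]
  · refine integral_congr fun u hu => ?_
    rw [uIcc_of_le hr1] at hu
    simp only [max_eq_right hu.1]

lemma integral_comp_groverGap_le {φ : ℝ → ℝ} {m : ℝ} (hm : 0 < m) (hm1 : m ≤ 1)
    (hφc : ContinuousOn φ (Ioi 0)) (hφ : AntitoneOn φ (Ioi 0)) :
    ∫ s in (0 : ℝ)..1, φ (groverGap m s) ≤ √m * φ √m + ∫ u in √m..1, φ u := by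
  have hr : 0 < √m := sqrt_pos.2 hm
  have hmax_pos : ∀ u, 0 < max √m u := fun u => hr.trans_le (le_max_left _ u)
  have hbound : Continuous fun u => φ (max √m u) :=
    hφc.comp_continuous (continuous_const.max continuous_id) hmax_pos
  have hgap : Continuous fun s => φ (groverGap m s) :=
    hφc.comp_continuous (continuous_groverGap m) (groverGap_pos hm hm1)
  have habs : Continuous fun s : ℝ => |1 - 2 * s| := by fun_prop
  calc ∫ s in (0 : ℝ)..1, φ (groverGap m s)
      ≤ ∫ s in (0 : ℝ)..1, φ (max √m |1 - 2 * s|) := by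
        refine integral_mono_on zero_le_one (hgap.intervalIntegrable _ _)
          ((hbound.comp habs).intervalIntegrable _ _) fun s hs =>
            hφ (hmax_pos _) (groverGap_pos hm hm1 s) (max_sqrt_abs_le_groverGap hm.le hm1 hs)
    _ = √m * φ √m + ∫ u in √m..1, φ u := by
        rw [integral_comp_abs_one_sub_two_mul hbound,
          integral_comp_max_eq hr (sqrt_le_one.2 hm1) hφc]

lemma integral_groverGap_rpow_neg_le {p m : ℝ} (hp : 1 < p) (hm : 0 < m) (hm1 : m ≤ 1) :
    ∫ s in (0 : ℝ)..1, groverGap m s ^ (-p) ≤ p / (p - 1) * m⁻¹ ^ ((p - 1) / 2) := by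
  have hr : 0 < √m := sqrt_pos.2 hm
  have hcont : ContinuousOn (fun x : ℝ => x ^ (-p)) (Ioi 0) :=
    continuousOn_id.rpow_const fun x hx => Or.inl (ne_of_gt hx)
  have hanti : AntitoneOn (fun x : ℝ => x ^ (-p)) (Ioi 0) :=
    fun x hx _ _ hxy => rpow_le_rpow_of_nonpos hx hxy (by linarith)
  have htail : ∫ u in √m..1, u ^ (-p) = (√m ^ (1 - p) - 1) / (p - 1) := by
    have hp1 : p - 1 ≠ 0 := by linarith
    have hp1' : 1 - p ≠ 0 := by linarith
    rw [integral_rpow (Or.inr ⟨by linarith, notMem_uIcc_of_lt hr one_pos⟩), one_rpow,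
      show -p + 1 = 1 - p by ring, div_eq_div_iff hp1' hp1]
    ring
  have hpow : √m ^ (1 - p) = m⁻¹ ^ ((p - 1) / 2) := by
    rw [sqrt_eq_rpow, ← rpow_mul hm.le, inv_rpow hm.le, ← rpow_neg hm.le]
    ring_nf
  have hhead : √m * √m ^ (-p) = √m ^ (1 - p) := by
    rw [sub_eq_add_neg, rpow_add hr, rpow_one]
  calc ∫ s in (0 : ℝ)..1, groverGap m s ^ (-p)
      ≤ √m * √m ^ (-p) + ∫ u in √m..1, u ^ (-p) :=
        integral_comp_groverGap_le hm hm1 hcont hanti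
    _ = √m ^ (1 - p) + (√m ^ (1 - p) - 1) / (p - 1) := by rw [hhead, htail]
    _ ≤ √m ^ (1 - p) + √m ^ (1 - p) / (p - 1) := by
        gcongr
        linarith
    _ = p / (p - 1) * √m ^ (1 - p) := by
        have hp1 : p - 1 ≠ 0 := by linarith
        field_simp
        ring
    _ = p / (p - 1) * m⁻¹ ^ ((p - 1) / 2) := by rw [hpow]

lemma integral_groverGap_inv_le {m : ℝ} (hm : 0 < m) (hm1 : m ≤ 1) :
    ∫ s in (0 : ℝ)..1, (groverGap m s)⁻¹ ≤ 1 + log m⁻¹ / 2 := by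
  have hr : 0 < √m := sqrt_pos.2 hm
  have hcont : ContinuousOn (fun x : ℝ => x⁻¹) (Ioi 0) :=
    continuousOn_inv₀.mono fun x hx => ne_of_gt hx
  have hanti : AntitoneOn (fun x : ℝ => x⁻¹) (Ioi 0) :=
    fun x hx _ _ hxy => inv_anti₀ hx hxy
  calc ∫ s in (0 : ℝ)..1, (groverGap m s)⁻¹
      ≤ √m * (√m)⁻¹ + ∫ u in √m..1, u⁻¹ :=
        integral_comp_groverGap_le hm hm1 hcont hanti
    _ = 1 + log m⁻¹ / 2 := by
        rw [mul_inv_cancel₀ hr.ne', integral_inv (notMem_uIcc_of_lt hr one_pos), one_div,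
          log_inv, log_inv, log_sqrt hm.le]
        ring

/-- Grover gap integrals.
For the Grover gap `g(s) = √(1 − 4(1 − M/N) s (1−s))` (with `0 < M ≤ N`,
`M/N ≤ 1/4`): for every `p > 1` there is a constant `C_p`, independent of `M, N`,
with `∫₀¹ g(s)^{−p} ds ≤ C_p (N/M)^{(p−1)/2}`; and for `p = 1`,
`∫₀¹ g(s)^{−1} ds = O(log (N/M))`. -/
theorem statement15 :
    (∀ p : ℝ, 1 < p → ∃ C > (0:ℝ), ∀ M N : ℝ, 0 < M → M ≤ N → M / N ≤ 1 / 4 →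
      (∫ s in (0:ℝ)..1,
          (Real.sqrt (1 - 4 * (1 - M / N) * s * (1 - s))) ^ (-p))
        ≤ C * (N / M) ^ ((p - 1) / 2)) ∧
    (∃ C > (0:ℝ), ∀ M N : ℝ, 0 < M → M ≤ N → M / N ≤ 1 / 4 →
      (∫ s in (0:ℝ)..1,
          (Real.sqrt (1 - 4 * (1 - M / N) * s * (1 - s)))⁻¹)
        ≤ C * Real.log (N / M)) := by
  have hratio : ∀ M N : ℝ, 0 < M → M ≤ N → 0 < M / N ∧ M / N ≤ 1 ∧ (M / N)⁻¹ = N / M :=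
    fun M N hM hMN =>
      ⟨div_pos hM (hM.trans_le hMN), div_le_one_of_le₀ hMN (hM.le.trans hMN), inv_div M N⟩
  refine ⟨fun p hp => ⟨p / (p - 1), div_pos (by linarith) (by linarith),
    fun M N hM hMN _ => ?_⟩, ⟨3 / 2, by norm_num, fun M N hM hMN hquarter => ?_⟩⟩
  · obtain ⟨hm, hm1, hinv⟩ := hratio M N hM hMN
    have := integral_groverGap_rpow_neg_le hp hm hm1
    rwa [hinv] at this
  · obtain ⟨hm, hm1, hinv⟩ := hratio M N hM hMN
    have hlog : 1 ≤ log (N / M) := by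
      have h4 : (4 : ℝ) ≤ (M / N)⁻¹ := (le_inv_comm₀ (by norm_num) hm).2 (by linarith)
      rw [← hinv, le_log_iff_exp_le (inv_pos.2 hm)]
      linarith [exp_one_lt_d9]
    have := integral_groverGap_inv_le hm hm1
    rw [hinv] at this
    exact this.trans (by linarith)
end

section
/- Let g(s) = √((1−s)² + (s/κ)²) for κ ≥ 1. Then for every p > 1 there is a constant C_p such that ∫₀¹ g(s)^{−p} ds ≤ C_p κ^{p−1}, and for p = 1, ∫₀¹ g(s)^{−1} ds = O(log κ). -/
/-!
Split `[0, 1]` at `1 - 1/κ`. To the left of this point the gap dominates `1 - s ≥ 1/κ`, so after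
the substitution `x = 1 - s` the integral of `φ ∘ g` for a decreasing `φ` is at most
`∫_{1/κ}^1 φ`; on the remaining interval, of length `1/κ`, the gap is at least `1/(2κ)`.
For `φ(x) = x^{-p}` both pieces are `O(κ^{p-1})`, and for `φ(x) = x⁻¹` they add up to
`log κ + 2`.
-/

open Real Set intervalIntegral

noncomputable def qlspGap (κ s : ℝ) : ℝ := √((1 - s) ^ 2 + (s / κ) ^ 2)

section qlspGap

variable {κ : ℝ}

lemma continuous_qlspGap : Continuous (qlspGap κ) := by
  unfold qlspGap
  fun_prop

lemma one_sub_le_qlspGap (s : ℝ) : 1 - s ≤ qlspGap κ s :=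
  le_sqrt_of_sq_le (le_add_of_nonneg_right (sq_nonneg _))

/-- By QM–AM, `qlspGap κ s ≥ ((1 - s) + s / κ) / √2`, and `(1 - s) + s / κ ≥ 1 / κ`
for `s ≤ 1`. -/
lemma inv_two_mul_le_qlspGap (hκ : 1 ≤ κ) {s : ℝ} (hs : s ≤ 1) :
    (2 * κ)⁻¹ ≤ qlspGap κ s := by
  have hκ₀ : 0 < κ := by linarith
  have hsum : κ⁻¹ ≤ (1 - s) + s / κ := by
    have : (1 - s) + s / κ - κ⁻¹ = (1 - s) * (1 - κ⁻¹) := by field_simp; ring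
    nlinarith [inv_le_one_of_one_le₀ hκ]
  apply le_sqrt_of_sq_le
  have hsq : ((2 * κ)⁻¹) ^ 2 = (κ⁻¹) ^ 2 / 4 := by field_simp; ring
  rw [hsq]
  nlinarith [sq_nonneg ((1 - s) - s / κ), mul_self_le_mul_self (by positivity) hsum]

lemma integral_comp_qlspGap_le (hκ : 1 ≤ κ) {φ : ℝ → ℝ} (hφ : AntitoneOn φ (Ioi 0))
    (hφc : ContinuousOn φ (Ioi 0)) :
    ∫ s in (0 : ℝ)..1, φ (qlspGap κ s) ≤
      (∫ x in κ⁻¹..1, φ x) + κ⁻¹ * φ (2 * κ)⁻¹ := by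
  have hκ₀ : 0 < κ := by linarith
  have hκ₁ : κ⁻¹ ≤ 1 := inv_le_one_of_one_le₀ hκ
  have hgap_pos : ∀ s ∈ Icc (0 : ℝ) 1, 0 < qlspGap κ s := fun s hs =>
    (inv_pos.2 (by positivity)).trans_le (inv_two_mul_le_qlspGap hκ hs.2)
  have hint : ∀ a ∈ Icc (0 : ℝ) 1, ∀ b ∈ Icc (0 : ℝ) 1,
      IntervalIntegrable (fun s => φ (qlspGap κ s)) MeasureTheory.volume a b :=
    fun a ha b hb => ((hφc.comp continuous_qlspGap.continuousOn hgap_pos).mono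
      (uIcc_subset_Icc ha hb)).intervalIntegrable
  set m := 1 - κ⁻¹
  have hm : m ∈ Icc (0 : ℝ) 1 := ⟨by linarith, by linarith [inv_pos.2 hκ₀]⟩
  have hleft : ∫ s in (0 : ℝ)..m, φ (qlspGap κ s) ≤ ∫ x in κ⁻¹..1, φ x := by
    have hφ_int : IntervalIntegrable φ MeasureTheory.volume κ⁻¹ 1 :=
      (hφc.mono fun x hx =>
        (inv_pos.2 hκ₀).trans_le (uIcc_of_le hκ₁ ▸ hx).1).intervalIntegrable
    calc ∫ s in (0 : ℝ)..m, φ (qlspGap κ s)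
        ≤ ∫ s in (0 : ℝ)..m, φ (1 - s) := by
          refine integral_mono_on hm.1 (hint _ ⟨le_rfl, zero_le_one⟩ _ hm)
            (by simpa [m] using (hφ_int.comp_sub_left 1).symm) fun s hs => ?_
          have : 0 < 1 - s := by linarith [hs.2, inv_pos.2 hκ₀]
          exact hφ this (hgap_pos s ⟨hs.1, hs.2.trans hm.2⟩) (one_sub_le_qlspGap s)
      _ = ∫ x in κ⁻¹..1, φ x := by simp [integral_comp_sub_left, m]
  have hright : ∫ s in m..1, φ (qlspGap κ s) ≤ κ⁻¹ * φ (2 * κ)⁻¹ :=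
    calc ∫ s in m..1, φ (qlspGap κ s)
        ≤ ∫ _ in m..1, φ (2 * κ)⁻¹ := by
          refine integral_mono_on hm.2 (hint _ hm _ ⟨zero_le_one, le_rfl⟩)
            intervalIntegrable_const fun s hs => ?_
          have hs' : s ∈ Icc (0 : ℝ) 1 := ⟨hm.1.trans hs.1, hs.2⟩
          exact hφ (mem_Ioi.2 (by positivity)) (hgap_pos s hs')
            (inv_two_mul_le_qlspGap hκ hs.2)
      _ = κ⁻¹ * φ (2 * κ)⁻¹ := by simp [m]
  rw [← integral_add_adjacent_intervals (hint _ ⟨le_rfl, zero_le_one⟩ _ hm)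
    (hint _ hm _ ⟨zero_le_one, le_rfl⟩)]
  exact add_le_add hleft hright

lemma integral_qlspGap_rpow_neg_le (hκ : 1 ≤ κ) {p : ℝ} (hp : 1 < p) :
    ∫ s in (0 : ℝ)..1, qlspGap κ s ^ (-p) ≤ ((p - 1)⁻¹ + 2 ^ p) * κ ^ (p - 1) := by
  have hκ₀ : 0 < κ := by linarith
  have hp₁ : 0 < p - 1 := by linarith
  have hpow : κ⁻¹ ^ (-p + 1) = κ ^ (p - 1) := by
    rw [show -p + 1 = -(p - 1) by ring, rpow_neg (inv_nonneg.2 hκ₀.le), inv_rpow hκ₀.le,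
      inv_inv]
  have hleft : ∫ x in κ⁻¹..1, x ^ (-p) ≤ (p - 1)⁻¹ * κ ^ (p - 1) := by
    rw [integral_rpow (Or.inr ⟨by linarith, notMem_uIcc_of_lt (inv_pos.2 hκ₀) one_pos⟩),
      one_rpow, hpow, show -p + 1 = -(p - 1) by ring, div_neg, ← neg_div, neg_sub, div_eq_inv_mul]
    exact mul_le_mul_of_nonneg_left (by linarith) (inv_nonneg.2 hp₁.le)
  have hright : κ⁻¹ * (2 * κ)⁻¹ ^ (-p) = 2 ^ p * κ ^ (p - 1) := by
    rw [inv_rpow (by positivity), ← rpow_neg (by positivity), neg_neg,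
      mul_rpow zero_le_two hκ₀.le, rpow_sub hκ₀, rpow_one]
    field_simp
  calc ∫ s in (0 : ℝ)..1, qlspGap κ s ^ (-p)
      ≤ (∫ x in κ⁻¹..1, x ^ (-p)) + κ⁻¹ * (2 * κ)⁻¹ ^ (-p) :=
        integral_comp_qlspGap_le hκ (antitoneOn_rpow_Ioi_of_exponent_nonpos (by linarith))
          fun x hx => (continuousAt_rpow_const x _ (Or.inl hx.ne')).continuousWithinAt
    _ ≤ ((p - 1)⁻¹ + 2 ^ p) * κ ^ (p - 1) := by rw [hright, add_mul]; gcongr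

lemma integral_qlspGap_inv_le (hκ : 1 ≤ κ) :
    ∫ s in (0 : ℝ)..1, (qlspGap κ s)⁻¹ ≤ log κ + 2 := by
  have hκ₀ : 0 < κ := by linarith
  calc ∫ s in (0 : ℝ)..1, (qlspGap κ s)⁻¹
      ≤ (∫ x in κ⁻¹..1, x⁻¹) + κ⁻¹ * (2 * κ)⁻¹⁻¹ :=
        integral_comp_qlspGap_le hκ inv_antitoneOn_Ioi
          (continuousOn_inv₀.mono fun _ hx => hx.ne')
    _ = log κ + 2 := by
      rw [integral_inv (notMem_uIcc_of_lt (inv_pos.2 hκ₀) one_pos), one_div, inv_inv, inv_inv]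
      field_simp

end qlspGap

/-- QLSP gap integrals.
For the QLSP gap `g(s) = √((1−s)² + (s/κ)²)` with `κ ≥ 1`: for every `p > 1`
there is a constant `C_p` with `∫₀¹ g(s)^{−p} ds ≤ C_p κ^{p−1}`; and for
`p = 1`, `∫₀¹ g(s)^{−1} ds = O(log κ)` (formulated as `≤ C (1 + log κ)`). -/
theorem statement16 :
    (∀ p : ℝ, 1 < p → ∃ C > (0:ℝ), ∀ κ : ℝ, 1 ≤ κ →
      (∫ s in (0:ℝ)..1,
          (Real.sqrt ((1 - s) ^ 2 + (s / κ) ^ 2)) ^ (-p))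
        ≤ C * κ ^ (p - 1)) ∧
    (∃ C > (0:ℝ), ∀ κ : ℝ, 1 ≤ κ →
      (∫ s in (0:ℝ)..1,
          (Real.sqrt ((1 - s) ^ 2 + (s / κ) ^ 2))⁻¹)
        ≤ C * (1 + Real.log κ)) := by
  refine ⟨fun p hp => ⟨(p - 1)⁻¹ + 2 ^ p, add_pos (inv_pos.2 (sub_pos.2 hp)) (by positivity),
    fun κ hκ => integral_qlspGap_rpow_neg_le hκ hp⟩, ⟨2, two_pos, fun κ hκ => ?_⟩⟩
  exact (integral_qlspGap_inv_le hκ).trans (by linarith [log_nonneg hκ])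
end

section
/- Let H₀ = 1 − |u⟩⟨u| and H₁ = 1 − P_M on ℂ^N, where |u⟩ is the uniform superposition and P_M projects onto an M-dimensional subspace M with 1 ≤ M < N. Then the eigenvalues of H(s) = (1−s)H₀ + sH₁ are: λ_{1,2}(s) = (1 ± √(1 − 4(1 − M/N)s(1−s)))/2 each with multiplicity 1, λ₃(s) = 1 − s with multiplicity M − 1, and λ₄ = 1 with multiplicity N − M − 1 (assuming |u⟩ ∉ M and |u⟩ ∉ M^⊥). In particular the gap between λ₁ and λ₂ equals √(1 − 4(1 − M/N)s(1−s)). -/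
/-!
Write `x • 1 - H(s) = A + (1 - s) |u⟩⟨u|` with `A = (x - 1) • 1 + s • P`. Diagonalising the
projection gives `det A = (x - 1)^(N - M) (x - 1 + s)^M` and
`A⁻¹ = (x - 1)⁻¹ (1 - P) + (x - 1 + s)⁻¹ P`, so by the matrix determinant lemma
`det (x • 1 - H(s))` only involves `⟨u|u⟩ = 1` and `⟨u|P|u⟩ = M/N`. Away from `x ∈ {1, 1 - s}` this
is the value of `(x² - x + (1 - M/N) s (1 - s)) (x - 1 + s)^(M - 1) (x - 1)^(N - M - 1)`, and the
quadratic factor has the roots `(1 ± √(1 - 4 (1 - M/N) s (1 - s))) / 2`.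
-/

open Matrix Polynomial

namespace Matrix

theorem det_add_vecMulVec {R : Type*} [CommRing R] {n : Type*} [Fintype n] [DecidableEq n]
    {A : Matrix n n R} (hA : IsUnit A.det) (u v : n → R) :
    (A + vecMulVec u v).det = A.det * (1 + v ⬝ᵥ A⁻¹ *ᵥ u) := by
  rw [vecMulVec_eq Unit, det_add_replicateCol_mul_replicateRow hA, Matrix.mul_assoc,
    ← replicateCol_mulVec, det_one_add_mul_comm, det_one_add_replicateCol_mul_replicateRow]

theorem inv_smul_one_add_smul_of_isIdempotentElem {K : Type*} [Field K] {n : Type*} [Fintype n]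
    [DecidableEq n] {P : Matrix n n K} (hP : IsIdempotentElem P)
    {x y : K} (hx : x ≠ 0) (hxy : x + y ≠ 0) :
    (x • (1 : Matrix n n K) + y • P)⁻¹ = x⁻¹ • (1 - P) + (x + y)⁻¹ • P := by
  refine inv_eq_right_inv ?_
  simp only [Matrix.add_mul, Matrix.mul_add, Matrix.smul_mul, Matrix.mul_smul, Matrix.mul_sub,
    Matrix.one_mul, Matrix.mul_one, hP.eq]
  match_scalars
  · field_simp
  · field_simp
    ring

namespace IsHermitian

variable {𝕜 : Type*} [RCLike 𝕜] {n : Type*} [Fintype n] [DecidableEq n]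

theorem det_smul_one_add_smul {A : Matrix n n 𝕜} (hA : A.IsHermitian) (x y : 𝕜) :
    (x • (1 : Matrix n n 𝕜) + y • A).det = ∏ i, (x + y * hA.eigenvalues i) := by
  have hconj : x • (1 : Matrix n n 𝕜) + y • A = Unitary.conjStarAlgAut 𝕜 _
      hA.eigenvectorUnitary (diagonal fun i => x + y * hA.eigenvalues i) := by
    conv_lhs => rw [hA.spectral_theorem]
    rw [← map_one (Unitary.conjStarAlgAut 𝕜 _ hA.eigenvectorUnitary), ← map_smul, ← map_smul,
      ← map_add, smul_one_eq_diagonal, ← diagonal_smul, diagonal_add]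
    rfl
  rw [hconj, Unitary.conjStarAlgAut_apply, det_mul, det_mul, mul_right_comm, ← det_mul,
    Unitary.mul_star_self_of_mem hA.eigenvectorUnitary.2, det_one, one_mul, det_diagonal]

theorem eigenvalues_eq_zero_or_one {P : Matrix n n 𝕜} (hP : P.IsHermitian)
    (hPP : IsIdempotentElem P) (i : n) : hP.eigenvalues i = 0 ∨ hP.eigenvalues i = 1 :=
  hPP.spectrum_subset ℝ (hP.eigenvalues_mem_spectrum_real i)

theorem det_smul_one_add_smul_of_isIdempotentElem {P : Matrix n n 𝕜} (hP : P.IsHermitian)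
    (hPP : IsIdempotentElem P) (x y : 𝕜) :
    (x • (1 : Matrix n n 𝕜) + y • P).det = x ^ (Fintype.card n - P.rank) * (x + y) ^ P.rank := by
  have hfactor : ∀ i, x + y * hP.eigenvalues i = if hP.eigenvalues i = 0 then x else x + y := by
    intro i
    rcases hP.eigenvalues_eq_zero_or_one hPP i with h | h <;> simp [h]
  have hcard := Finset.card_filter_add_card_filter_not (s := Finset.univ)
    (fun i => hP.eigenvalues i = 0)
  rw [hP.det_smul_one_add_smul, Finset.prod_congr rfl fun i _ => hfactor i, Finset.prod_ite,
    Finset.prod_const, Finset.prod_const, hP.rank_eq_card_non_zero_eigs, Fintype.card_subtype]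
  simp only [Finset.card_univ, ne_eq] at hcard ⊢
  congr 2
  omega

end IsHermitian

end Matrix

theorem Polynomial.X_sq_sub_X_add_C_mul_eq {R : Type*} [CommRing R] {a b : R} (hab : a + b = 1) :
    (X ^ 2 - X + C (a * b) : R[X]) = (X - C a) * (X - C b) := by
  have hC : C a + C b = (1 : R[X]) := by rw [← C_add, hab, C_1]
  rw [C_mul]
  linear_combination X * hC

def adiabaticHamiltonian {𝕜 : Type*} [RCLike 𝕜] {n : Type*} [DecidableEq n]
    (u : n → 𝕜) (P : Matrix n n 𝕜) (s : 𝕜) : Matrix n n 𝕜 :=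
  (1 - s) • (1 - vecMulVec u (star u)) + s • (1 - P)

section adiabaticHamiltonian

variable {𝕜 : Type*} [RCLike 𝕜] {n : Type*} [Fintype n] [DecidableEq n]
  {u : n → 𝕜} {P : Matrix n n 𝕜} {s : 𝕜}

theorem scalar_sub_adiabaticHamiltonian (x : 𝕜) :
    scalar n x - adiabaticHamiltonian u P s =
      ((x - 1) • 1 + s • P) + vecMulVec ((1 - s) • u) (star u) := by
  rw [adiabaticHamiltonian, smul_vecMulVec, scalar_apply, ← smul_one_eq_diagonal]
  module

theorem eval_charpoly_adiabaticHamiltonian (hu : star u ⬝ᵥ u = 1) (hP : P.IsHermitian)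
    (hPP : IsIdempotentElem P) {x : 𝕜} (hx : x - 1 ≠ 0) (hxs : x - 1 + s ≠ 0) :
    (adiabaticHamiltonian u P s).charpoly.eval x =
      (x - 1) ^ (Fintype.card n - P.rank) * (x - 1 + s) ^ P.rank *
        (1 + (1 - s) * ((x - 1)⁻¹ * (1 - star u ⬝ᵥ P *ᵥ u) +
          (x - 1 + s)⁻¹ * (star u ⬝ᵥ P *ᵥ u))) := by
  have hdet := hP.det_smul_one_add_smul_of_isIdempotentElem hPP (x - 1) s
  rw [eval_charpoly, scalar_sub_adiabaticHamiltonian, det_add_vecMulVec, hdet,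
    inv_smul_one_add_smul_of_isIdempotentElem hPP hx hxs]
  · congr 2
    simp only [Matrix.add_mulVec, Matrix.smul_mulVec, Matrix.sub_mulVec, Matrix.one_mulVec,
      Matrix.mulVec_smul, dotProduct_add, dotProduct_smul, dotProduct_sub, hu, smul_eq_mul]
  · rw [hdet]
    exact (mul_ne_zero (pow_ne_zero _ hx) (pow_ne_zero _ hxs)).isUnit

theorem charpoly_adiabaticHamiltonian (hu : star u ⬝ᵥ u = 1) (hP : P.IsHermitian)
    (hPP : IsIdempotentElem P) (hrank : 1 ≤ P.rank) (hrank' : P.rank < Fintype.card n) :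
    (adiabaticHamiltonian u P s).charpoly =
      (X ^ 2 - X + C ((1 - star u ⬝ᵥ P *ᵥ u) * s * (1 - s))) * (X - C (1 - s)) ^ (P.rank - 1) *
        (X - 1) ^ (Fintype.card n - P.rank - 1) := by
  refine eq_of_infinite_eval_eq _ _
    (((Set.finite_singleton (1 - s)).insert 1).infinite_compl.mono ?_)
  rintro x hx
  simp only [Set.mem_compl_iff, Set.mem_insert_iff, Set.mem_singleton_iff, not_or] at hx
  have hx1 : x - 1 ≠ 0 := sub_ne_zero.2 hx.1
  have hxs : x - 1 + s ≠ 0 := fun h => hx.2 (by linear_combination h)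
  rw [Set.mem_ofPred_eq, eval_charpoly_adiabaticHamiltonian hu hP hPP hx1 hxs]
  simp only [eval_mul, eval_pow, eval_sub, eval_add, eval_X, eval_C, eval_one]
  generalize P.rank = m at hrank hrank' ⊢
  obtain ⟨r, rfl⟩ := Nat.exists_eq_add_of_le' hrank
  obtain ⟨k, hk⟩ := Nat.exists_eq_add_of_lt hrank'
  rw [hk, show r + 1 + k + 1 - (r + 1) = k + 1 by omega, add_tsub_cancel_right,
    add_tsub_cancel_right, pow_succ, pow_succ]
  field_simp
  ring

end adiabaticHamiltonian

theorem star_dotProduct_self_uniform {N : ℕ} (hN : N ≠ 0) :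
    star (fun _ : Fin N => ((1 / √N : ℝ) : ℂ)) ⬝ᵥ (fun _ => ((1 / √N : ℝ) : ℂ)) = 1 := by
  have hN' : (0 : ℝ) < N := by positivity
  simp only [dotProduct, Pi.star_apply, RCLike.star_def, Complex.conj_ofReal,
    ← Complex.ofReal_mul, Finset.sum_const, Finset.card_univ, Fintype.card_fin, nsmul_eq_mul]
  rw [← Complex.ofReal_natCast, ← Complex.ofReal_mul, Complex.ofReal_eq_one]
  field_simp
  exact (Real.sq_sqrt hN'.le).symm

theorem statement19_general (N M : ℕ) (hM : 1 ≤ M) (hMN : M < N)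
    (u : Fin N → ℂ) (hu : u = fun _ => ((1 / Real.sqrt N : ℝ) : ℂ))
    (PM : Matrix (Fin N) (Fin N) ℂ)
    (hPM_herm : PM.IsHermitian) (hPM_proj : PM * PM = PM)
    (hPM_rank : PM.rank = M)
    (hoverlap : star u ⬝ᵥ PM.mulVec u = (M : ℂ) / N)
    (s : ℝ) (hs : s ∈ Set.Icc (0:ℝ) 1) :
    (((1 - s : ℂ) • ((1 : Matrix (Fin N) (Fin N) ℂ) - vecMulVec u (star u)) +
        (s : ℂ) • ((1 : Matrix (Fin N) (Fin N) ℂ) - PM)).charpoly =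
      (X - C (((1 + Real.sqrt (1 - 4 * (1 - (M:ℝ)/N) * s * (1 - s))) / 2 : ℝ) : ℂ)) *
      (X - C (((1 - Real.sqrt (1 - 4 * (1 - (M:ℝ)/N) * s * (1 - s))) / 2 : ℝ) : ℂ)) *
      (X - C ((1 - s : ℝ) : ℂ)) ^ (M - 1) *
      (X - C 1) ^ (N - M - 1)) ∧
    ((1 + Real.sqrt (1 - 4 * (1 - (M:ℝ)/N) * s * (1 - s))) / 2 -
        (1 - Real.sqrt (1 - 4 * (1 - (M:ℝ)/N) * s * (1 - s))) / 2 =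
      Real.sqrt (1 - 4 * (1 - (M:ℝ)/N) * s * (1 - s))) := by
  set μ : ℝ := M / N
  set d := √(1 - 4 * (1 - μ) * s * (1 - s))
  have hdisc : 0 ≤ 1 - 4 * (1 - μ) * s * (1 - s) := by
    have hμ : 0 ≤ μ := by positivity
    -- the discriminant is `(1 - 2s)² + 4μ s (1 - s)`
    nlinarith [sq_nonneg (1 - 2 * s), mul_nonneg (mul_nonneg hμ hs.1) (sub_nonneg.2 hs.2)]
  have hroots : (1 + d) / 2 * ((1 - d) / 2) = (1 - μ) * s * (1 - s) := by
    linear_combination (-1 / 4 : ℝ) * Real.sq_sqrt hdisc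
  have hcharpoly := charpoly_adiabaticHamiltonian (s := (s : ℂ))
    (hu ▸ star_dotProduct_self_uniform (by omega)) hPM_herm hPM_proj
    (hPM_rank ▸ hM) (by rwa [hPM_rank, Fintype.card_fin])
  rw [hoverlap, hPM_rank, Fintype.card_fin,
    show (1 - (M : ℂ) / N) * s * (1 - s) = (((1 + d) / 2 : ℝ) : ℂ) * (((1 - d) / 2 : ℝ) : ℂ) by
      rw [← Complex.ofReal_mul, hroots]; push_cast [μ]; ring,
    X_sq_sub_X_add_C_mul_eq (by push_cast; ring)] at hcharpoly
  rw [C_1, Complex.ofReal_sub, Complex.ofReal_one]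
  exact ⟨hcharpoly, by ring⟩

/-- spectrum of the adiabatic Grover Hamiltonian.
Let `u` be the uniform superposition on `ℂ^N`, `PM` the orthogonal projection
onto an `M`-dimensional subspace with `⟨u|PM|u⟩ = M/N` (`1 ≤ M < N`), and
`H(s) = (1−s)(1 − |u⟩⟨u|) + s(1 − PM)`.  Then the eigenvalues of `H(s)` are
`λ_{1,2}(s) = (1 ± √(1 − 4(1 − M/N)s(1−s)))/2` with multiplicity `1` each,
`1 − s` with multiplicity `M − 1`, and `1` with multiplicity `N − M − 1`
(stated via the characteristic polynomial); moreover `λ₁ − λ₂` equals the gap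
`√(1 − 4(1 − M/N)s(1−s))`. -/
theorem statement19 (N M : ℕ) (hN : 2 ≤ N) (hM : 1 ≤ M) (hMN : M < N)
    (u : Fin N → ℂ) (hu : u = fun _ => ((1 / Real.sqrt N : ℝ) : ℂ))
    (PM : Matrix (Fin N) (Fin N) ℂ)
    (hPM_herm : PM.IsHermitian) (hPM_proj : PM * PM = PM)
    (hPM_rank : PM.rank = M)
    (hoverlap : star u ⬝ᵥ PM.mulVec u = (M : ℂ) / N)
    (s : ℝ) (hs : s ∈ Set.Icc (0:ℝ) 1) :
    (((1 - s : ℂ) • ((1 : Matrix (Fin N) (Fin N) ℂ) - vecMulVec u (star u)) +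
        (s : ℂ) • ((1 : Matrix (Fin N) (Fin N) ℂ) - PM)).charpoly =
      (X - C (((1 + Real.sqrt (1 - 4 * (1 - (M:ℝ)/N) * s * (1 - s))) / 2 : ℝ) : ℂ)) *
      (X - C (((1 - Real.sqrt (1 - 4 * (1 - (M:ℝ)/N) * s * (1 - s))) / 2 : ℝ) : ℂ)) *
      (X - C ((1 - s : ℝ) : ℂ)) ^ (M - 1) *
      (X - C 1) ^ (N - M - 1)) ∧
    ((1 + Real.sqrt (1 - 4 * (1 - (M:ℝ)/N) * s * (1 - s))) / 2 -
        (1 - Real.sqrt (1 - 4 * (1 - (M:ℝ)/N) * s * (1 - s))) / 2 =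
      Real.sqrt (1 - 4 * (1 - (M:ℝ)/N) * s * (1 - s))) :=
  statement19_general N M hM hMN u hu PM hPM_herm hPM_proj hPM_rank hoverlap s hs
end
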